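/- arXiv:1708.00769 — 5 statements merged into one kernel-verified Lean document; each statement's English description precedes it below -/
import Mathlib

section
/- If a linear map E : M_d(ℂ) → M_d(ℂ) is Hermiticity preserving, then there exist real numbers λ_α and matrices K_α such that E[ρ] = Σ_α λ_α K_α ρ K_α† for all ρ; conversely, any map of this form is Hermiticity preserving. -/
open Matrix BigOperators

lemma stdBM_conjT {d : ℕ} (k l : Fin d) :
    (Matrix.single k l (1:ℂ))ᴴ = Matrix.single l k 1 := by
  ext i j
  simp [conjTranspose_apply, Matrix.single, and_comm]

/-- A linear map `E` on `d×d` matrices is Hermiticity preserving iff there exist real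
numbers `λ_α` and matrices `K_α` with `E[ρ] = Σ_α λ_α K_α ρ K_α†` for all `ρ`. -/
theorem stmt10 {d : ℕ}
    (E : Matrix (Fin d) (Fin d) ℂ →ₗ[ℂ] Matrix (Fin d) (Fin d) ℂ) :
    (∀ ρ : Matrix (Fin d) (Fin d) ℂ, ρᴴ = ρ → (E ρ)ᴴ = E ρ) ↔
      ∃ (n : ℕ) (lam : Fin n → ℝ) (K : Fin n → Matrix (Fin d) (Fin d) ℂ),
        ∀ ρ, E ρ = ∑ α, (lam α : ℂ) • (K α * ρ * (K α)ᴴ) := by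
  constructor
  · intro h
    -- Key: E sends e_{lk} to (E e_{kl})ᴴ
    have key : ∀ k l : Fin d, E (Matrix.single l k 1) = (E (Matrix.single k l 1))ᴴ := by
      intro k l
      set A := E (Matrix.single k l 1) with hA
      set B := E (Matrix.single l k 1) with hB
      have h1 : Aᴴ + Bᴴ = A + B := by
        have := h (Matrix.single k l 1 + Matrix.single l k 1) ?_
        · rw [map_add, conjTranspose_add] at this
          exact this
        · rw [conjTranspose_add, stdBM_conjT, stdBM_conjT, add_comm]
      have h2 : Aᴴ - Bᴴ = B - A := by
        have herm : (Complex.I • (Matrix.single k l (1:ℂ) - Matrix.single l k 1))ᴴ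
            = Complex.I • (Matrix.single k l 1 - Matrix.single l k 1) := by
          rw [conjTranspose_smul, conjTranspose_sub, stdBM_conjT, stdBM_conjT]
          simp only [Complex.star_def, Complex.conj_I, neg_smul]
          rw [← smul_neg, neg_sub]
        have h2' := h _ herm
        rw [_root_.map_smul, map_sub, conjTranspose_smul, conjTranspose_sub,
          Complex.star_def, Complex.conj_I, neg_smul] at h2'
        have hinj : Complex.I • (Aᴴ - Bᴴ) = Complex.I • (B - A) := by
          rw [← neg_neg (Complex.I • (Aᴴ - Bᴴ)), h2', ← smul_neg, neg_sub]
        exact smul_right_injective _ Complex.I_ne_zero hinj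
      have h3 : Aᴴ + Aᴴ = B + B := by
        calc Aᴴ + Aᴴ = (Aᴴ + Bᴴ) + (Aᴴ - Bᴴ) := by abel
        _ = (A + B) + (B - A) := by rw [h1, h2]
        _ = B + B := by abel
      have h4 := congrArg (fun M => (2:ℂ)⁻¹ • M) h3
      rw [← two_smul ℂ Aᴴ, ← two_smul ℂ B, smul_smul, smul_smul,
        inv_mul_cancel₀ (two_ne_zero : (2:ℂ) ≠ 0), one_smul, one_smul] at h4
      rw [hB] at h4 ⊢
      exact h4.symm
    -- Choi matrix
    set C : Matrix (Fin d × Fin d) (Fin d × Fin d) ℂ :=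
      fun p q => E (Matrix.single p.2 q.2 1) p.1 q.1 with hCdef
    have hC : C.IsHermitian := by
      ext p q
      simp only [conjTranspose_apply, hCdef]
      rw [key q.2 p.2]
      simp [conjTranspose_apply]
      rfl
    set U : Matrix (Fin d × Fin d) (Fin d × Fin d) ℂ := (hC.eigenvectorUnitary : Matrix (Fin d × Fin d) (Fin d × Fin d) ℂ) with hU
    have hspec := hC.spectral_theorem
    have entry : ∀ p q, C p q =
        ∑ β : Fin d × Fin d, U p β * (hC.eigenvalues β : ℂ) * (starRingEnd ℂ) (U q β) := by
      intro p q
      conv_lhs => rw [hspec, Unitary.conjStarAlgAut_apply]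
      simp only [Matrix.mul_apply, diagonal_apply, Function.comp_apply]
      apply Finset.sum_congr rfl
      intro β _
      rw [Finset.sum_eq_single β]
      · rw [if_pos rfl, Matrix.star_apply, RCLike.star_def, ← hU]
        norm_cast
      · intro b _ hb
        simp [if_neg hb]
      · simp
    refine ⟨d*d, fun α => hC.eigenvalues (finProdFinEquiv.symm α),
      fun α => Matrix.of fun i k => U (i,k) (finProdFinEquiv.symm α), fun ρ => ?_⟩
    have reidx := Fintype.sum_equiv finProdFinEquiv
      (fun β : Fin d × Fin d => (hC.eigenvalues β : ℂ) •
        ((Matrix.of fun i k => U (i,k) β) * ρ * (Matrix.of fun i k => U (i,k) β)ᴴ))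
      (fun α : Fin (d*d) => (hC.eigenvalues (finProdFinEquiv.symm α) : ℂ) •
        ((Matrix.of fun i k => U (i,k) (finProdFinEquiv.symm α)) * ρ *
          (Matrix.of fun i k => U (i,k) (finProdFinEquiv.symm α))ᴴ))
      (by intro β; simp)
    rw [← reidx]
    ext i j
    have hEρ : E ρ i j = ∑ k, ∑ l, ρ k l * C (i,k) (j,l) := by
      conv_lhs => rw [matrix_eq_sum_single ρ]
      rw [map_sum, Matrix.sum_apply]
      apply Finset.sum_congr rfl
      intro k _
      rw [map_sum, Matrix.sum_apply]
      apply Finset.sum_congr rfl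
      intro l _
      have hsb : Matrix.single k l (ρ k l) = ρ k l • Matrix.single k l (1:ℂ) := by
        rw [smul_single, smul_eq_mul, mul_one]
      rw [hsb, _root_.map_smul, Matrix.smul_apply, smul_eq_mul, hCdef]
    rw [hEρ]
    simp only [Matrix.sum_apply, Matrix.smul_apply, Matrix.mul_apply,
      Matrix.conjTranspose_apply, Matrix.of_apply, smul_eq_mul, Complex.star_def]
    calc ∑ k, ∑ l, ρ k l * C (i,k) (j,l)
        = ∑ k, ∑ l, ∑ β : Fin d × Fin d,
            ρ k l * (U (i,k) β * (hC.eigenvalues β : ℂ) * (starRingEnd ℂ) (U (j,l) β)) := by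
          refine Finset.sum_congr rfl fun k _ => Finset.sum_congr rfl fun l _ => ?_
          rw [entry, Finset.mul_sum]
      _ = ∑ k, ∑ β : Fin d × Fin d, ∑ l,
            ρ k l * (U (i,k) β * (hC.eigenvalues β : ℂ) * (starRingEnd ℂ) (U (j,l) β)) :=
          Finset.sum_congr rfl fun _ _ => Finset.sum_comm
      _ = ∑ β : Fin d × Fin d, ∑ k, ∑ l,
            ρ k l * (U (i,k) β * (hC.eigenvalues β : ℂ) * (starRingEnd ℂ) (U (j,l) β)) :=
          Finset.sum_comm
      _ = _ := by
          refine Finset.sum_congr rfl fun β _ => ?_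
          rw [Finset.sum_comm, Finset.mul_sum]
          refine Finset.sum_congr rfl fun l _ => ?_
          rw [Finset.sum_mul, Finset.mul_sum]
          refine Finset.sum_congr rfl fun k _ => ?_
          ring
  · rintro ⟨n, lam, K, hK⟩ ρ hρ
    rw [hK]
    simp only [conjTranspose_sum, conjTranspose_smul, conjTranspose_mul,
      conjTranspose_conjTranspose, hρ]
    apply Finset.sum_congr rfl
    intro α _
    rw [Complex.star_def, Complex.conj_ofReal, mul_assoc]
end

section
/- A linear map E : M_d(ℂ) → M_d(ℂ) is completely positive if and only if its Choi matrix Υ_E = (E ⊗ id)[|I⟩⟨I|] is positive semidefinite. -/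
open Matrix Kronecker BigOperators ComplexOrder

/-- The extension `E ⊗ id_n` of a map on `M_d(ℂ)` to `M_d(ℂ) ⊗ M_n(ℂ)`, acting blockwise. -/
def matExt {d n : ℕ} (E : Matrix (Fin d) (Fin d) ℂ → Matrix (Fin d) (Fin d) ℂ)
    (η : Matrix (Fin d × Fin n) (Fin d × Fin n) ℂ) :
    Matrix (Fin d × Fin n) (Fin d × Fin n) ℂ :=
  Matrix.of fun p q => E (Matrix.of fun i j => η (i, p.2) (j, q.2)) p.1 q.1

/-- The Choi matrix `Υ_E = (E ⊗ id)[|I⟩⟨I|] = Σ_{k,l} E[E_{kl}] ⊗ E_{kl}` of a linear map. -/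
noncomputable def choi {d : ℕ}
    (E : Matrix (Fin d) (Fin d) ℂ →ₗ[ℂ] Matrix (Fin d) (Fin d) ℂ) :
    Matrix (Fin d × Fin d) (Fin d × Fin d) ℂ :=
  ∑ k, ∑ l, (E (single k l 1)) ⊗ₖ (single k l 1)

lemma choi_apply {d : ℕ}
    (E : Matrix (Fin d) (Fin d) ℂ →ₗ[ℂ] Matrix (Fin d) (Fin d) ℂ) (i k j l : Fin d) :
    choi E (i, k) (j, l) = E (single k l 1) i j := by
  simp only [choi, Matrix.sum_apply, kroneckerMap_apply, Matrix.single, of_apply]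
  rw [Finset.sum_eq_single k]
  · rw [Finset.sum_eq_single l]
    · simp
    · intro b _ hb; simp [hb]
    · simp
  · intro a _ ha
    apply Finset.sum_eq_zero
    intro b _
    simp [ha]
  · simp

lemma posSemidef_sum {m ι : Type*} [Fintype m] (s : Finset ι)
    (f : ι → Matrix m m ℂ) (h : ∀ i ∈ s, (f i).PosSemidef) :
    (∑ i ∈ s, f i).PosSemidef := by
  classical
  induction s using Finset.induction with
  | empty => simpa using Matrix.PosSemidef.zero
  | @insert _ _ ha ih =>
    rw [Finset.sum_insert ha]
    exact (h _ (Finset.mem_insert_self _ _)).add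
      (ih fun i hi => h i (Finset.mem_insert_of_mem hi))

lemma kraus_apply {d : ℕ} (E : Matrix (Fin d) (Fin d) ℂ →ₗ[ℂ] Matrix (Fin d) (Fin d) ℂ)
    (A : Matrix (Fin d × Fin d) (Fin d × Fin d) ℂ) (hA : choi E = Aᴴ * A)
    (X : Matrix (Fin d) (Fin d) ℂ) (i j : Fin d) :
    E X i j = ∑ m, ∑ k, ∑ l, star (A m (i, k)) * X k l * A m (j, l) := by
  have hsmul : ∀ (k l : Fin d) (c : ℂ), single k l c = c • single k l 1 := by
    intro k l c
    ext a b
    simp [Matrix.single, smul_ite]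
  have hE : ∀ (k l : Fin d) (c : ℂ),
      E (single k l c) i j = ∑ m, star (A m (i, k)) * c * A m (j, l) := by
    intro k l c
    rw [hsmul, _root_.map_smul, Matrix.smul_apply, smul_eq_mul, ← choi_apply, hA, Matrix.mul_apply,
      Finset.mul_sum]
    refine Finset.sum_congr rfl fun m _ => ?_
    simp only [conjTranspose_apply]
    ring
  calc E X i j = ∑ k, ∑ l, E (single k l (X k l)) i j := by
        conv_lhs => rw [matrix_eq_sum_single X]
        rw [map_sum, Matrix.sum_apply]
        exact Finset.sum_congr rfl fun k _ => by rw [map_sum, Matrix.sum_apply]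
    _ = ∑ k, ∑ l, ∑ m, star (A m (i, k)) * X k l * A m (j, l) := by
        exact Finset.sum_congr rfl fun k _ => Finset.sum_congr rfl fun l _ => hE k l _
    _ = ∑ k, ∑ m, ∑ l, star (A m (i, k)) * X k l * A m (j, l) :=
        Finset.sum_congr rfl fun _ _ => Finset.sum_comm
    _ = ∑ m, ∑ k, ∑ l, star (A m (i, k)) * X k l * A m (j, l) := Finset.sum_comm

lemma matExt_eq {d n : ℕ} (E : Matrix (Fin d) (Fin d) ℂ →ₗ[ℂ] Matrix (Fin d) (Fin d) ℂ)
    (A : Matrix (Fin d × Fin d) (Fin d × Fin d) ℂ) (hA : choi E = Aᴴ * A)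
    (η : Matrix (Fin d × Fin n) (Fin d × Fin n) ℂ) :
    matExt (E ·) η = ∑ m : Fin d × Fin d,
      ((Matrix.of fun i k => star (A m (i, k))) ⊗ₖ (1 : Matrix (Fin n) (Fin n) ℂ)) * η *
      ((Matrix.of fun i k => star (A m (i, k))) ⊗ₖ (1 : Matrix (Fin n) (Fin n) ℂ))ᴴ := by
  funext p q
  show E (Matrix.of fun i j => η (i, p.2) (j, q.2)) p.1 q.1 = _
  rw [kraus_apply E A hA, Matrix.sum_apply]
  refine Finset.sum_congr rfl fun m _ => ?_
  rw [Matrix.mul_apply]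
  simp only [Matrix.mul_apply, conjTranspose_apply, kroneckerMap_apply, of_apply,
    Fintype.sum_prod_type, one_apply, mul_ite, mul_one, mul_zero, ite_mul, zero_mul,
    star_mul', star_star, apply_ite (star : ℂ → ℂ), star_zero, Finset.sum_ite_eq', Finset.mem_univ, if_true,
    Finset.sum_ite_eq, Finset.sum_mul, Finset.mul_sum]
  exact Finset.sum_comm

/-- A linear map `E : M_d(ℂ) → M_d(ℂ)` is completely positive iff its Choi matrix is
positive semidefinite. -/
theorem stmt12 {d : ℕ}
    (E : Matrix (Fin d) (Fin d) ℂ →ₗ[ℂ] Matrix (Fin d) (Fin d) ℂ) :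
    (∀ (n : ℕ) (η : Matrix (Fin d × Fin n) (Fin d × Fin n) ℂ),
      η.PosSemidef → (matExt (E ·) η).PosSemidef) ↔ (choi E).PosSemidef := by
  constructor
  · intro h
    set v : Fin d × Fin d → ℂ := fun p => if p.1 = p.2 then 1 else 0 with hv
    set η₀ : Matrix (Fin d × Fin d) (Fin d × Fin d) ℂ :=
      Matrix.of fun p q => v p * v q with hη₀
    have hvstar : ∀ p, star (v p) = v p := by
      intro p; simp only [hv]; split <;> simp
    have hPSD : η₀.PosSemidef := by
      refine posSemidef_iff_dotProduct_mulVec.mpr ⟨?_, ?_⟩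
      · ext p q
        simp only [hη₀, conjTranspose_apply, of_apply, star_mul', hvstar]
        ring
      · intro x
        have : (star x) ⬝ᵥ (η₀ *ᵥ x) = star (∑ p, v p * x p) * (∑ p, v p * x p) := by
          simp only [dotProduct, mulVec, hη₀, of_apply, Pi.star_apply, star_sum, star_mul',
            hvstar, Finset.sum_mul, Finset.mul_sum, dotProduct]
          rw [Finset.sum_comm]
          refine Finset.sum_congr rfl fun p _ => Finset.sum_congr rfl fun q _ => by ring
        rw [this]
        exact star_mul_self_nonneg _
    have heq : matExt (E ·) η₀ = choi E := by
      funext p q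
      obtain ⟨i, k⟩ := p
      obtain ⟨j, l⟩ := q
      rw [choi_apply]
      show E (Matrix.of fun a b => v (a, k) * v (b, l)) i j = _
      have harg : (Matrix.of fun a b => v (a, k) * v (b, l)) = single k l 1 := by
        ext a b
        simp only [of_apply, hv, Matrix.single]
        by_cases hak : k = a <;> by_cases hbl : l = b <;>
          simp [hak, hbl, eq_comm]
      rw [harg]
    rw [← heq]
    exact h d η₀ hPSD
  · intro hc n η hη
    open scoped MatrixOrder in obtain ⟨A, hA⟩ := CStarAlgebra.nonneg_iff_eq_star_mul_self.mp hc.nonneg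
    rw [matExt_eq E A hA]
    exact posSemidef_sum _ _ fun m _ => hη.mul_mul_conjTranspose_same _
end

section
/- If a linear map E satisfies (E ⊗ id_d)[η] ≥ 0 for all positive semidefinite η ∈ M_d(ℂ) ⊗ M_d(ℂ) (i.e., positivity of the extension by an ancilla of dimension equal to d), then E ⊗ id_n preserves positivity for every dimension n ≥ 1. -/
open Matrix BigOperators ComplexOrder

lemma aux_posSemidef {m : Type*} [Fintype m] [DecidableEq m] {M : Matrix m m ℂ}
    (hM : ∀ x : m → ℂ, 0 ≤ star x ⬝ᵥ M *ᵥ x) : M.PosSemidef := by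
  refine Matrix.PosSemidef.of_dotProduct_mulVec_nonneg ?_ hM
  rw [Matrix.isHermitian_iff_isSymmetric, LinearMap.isSymmetric_iff_inner_map_self_real]
  intro v
  obtain ⟨x, rfl⟩ := (WithLp.equiv 2 (m → ℂ)).symm.surjective v
  rw [WithLp.equiv_symm_apply, toEuclideanLin_toLp, EuclideanSpace.inner_toLp_toLp, dotProduct_comm]
  have h0 := hM x
  have him : (star x ⬝ᵥ M *ᵥ x).im = 0 := by
    have := (Complex.le_def.mp h0).2
    simpa using this.symm
  have hq : star (Matrix.toLin' M x) ⬝ᵥ x = star (star x ⬝ᵥ M *ᵥ x) := by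
    simp [Matrix.star_dotProduct, dotProduct_comm, dotProduct, map_sum, mul_comm]
  rw [hq]
  simp [Complex.ext_iff, him]

/-- If the extension of `E` by an ancilla of dimension `d` preserves positive
semidefiniteness, then `E ⊗ id_n` preserves positivity for every dimension `n ≥ 1`. -/
theorem stmt13 {d : ℕ}
    (E : Matrix (Fin d) (Fin d) ℂ →ₗ[ℂ] Matrix (Fin d) (Fin d) ℂ)
    (h : ∀ η : Matrix (Fin d × Fin d) (Fin d × Fin d) ℂ,
      η.PosSemidef → (matExt (E ·) η).PosSemidef) :
    ∀ (n : ℕ), 1 ≤ n → ∀ η : Matrix (Fin d × Fin n) (Fin d × Fin n) ℂ,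
      η.PosSemidef → (matExt (E ·) η).PosSemidef := by
  intro n _ η hη
  apply aux_posSemidef
  intro x
  set A : Matrix (Fin d × Fin n) (Fin d × Fin d) ℂ :=
    Matrix.of fun p q => if p.1 = q.1 then x (q.2, p.2) else 0 with hAdef
  have hη' : (Aᴴ * η * A).PosSemidef := hη.conjTranspose_mul_mul_same A
  have hP := h _ hη'
  have hblock : ∀ i j : Fin d,
      (Matrix.of fun a b => (Aᴴ * η * A) ((a, i)) ((b, j)) : Matrix (Fin d) (Fin d) ℂ)
        = ∑ s : Fin n, ∑ t : Fin n,
            ((starRingEnd ℂ) (x (i, s)) * x (j, t)) •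
              (Matrix.of fun a b => η ((a, s)) ((b, t)) : Matrix (Fin d) (Fin d) ℂ) := by
    intro i j
    ext a b
    simp only [Matrix.of_apply, Matrix.sum_apply, Matrix.smul_apply,
      smul_eq_mul, Matrix.mul_apply, Matrix.conjTranspose_apply, hAdef,
      Fintype.sum_prod_type, apply_ite (star : ℂ → ℂ), star_zero,
      ite_mul, mul_ite, zero_mul, mul_zero, Finset.sum_ite_irrel, Finset.sum_const_zero,
      Finset.sum_ite_eq, Finset.sum_ite_eq', Finset.mem_univ, if_true, starRingEnd_apply]
    rw [Finset.sum_comm]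
    refine Finset.sum_congr rfl fun s _ => ?_
    rw [Finset.sum_mul]
    refine Finset.sum_congr rfl fun t _ => ?_
    ring
  have this1 : ∀ i j : Fin d,
      (E (Matrix.of fun a b => (Aᴴ * η * A) ((a, i)) ((b, j)))) i j
        = ∑ s : Fin n, ∑ t : Fin n,
            ((starRingEnd ℂ) (x (i, s)) * x (j, t)) *
              (E (Matrix.of fun a b => η ((a, s)) ((b, t)))) i j := by
    intro i j
    rw [hblock i j]
    rw [map_sum]
    simp only [map_sum, LinearMap.map_smul, Matrix.sum_apply, Matrix.smul_apply, smul_eq_mul]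
  have key : star x ⬝ᵥ (matExt (E ·) η) *ᵥ x
      = star (fun p : Fin d × Fin d => if p.1 = p.2 then (1:ℂ) else 0) ⬝ᵥ
        (matExt (E ·) (Aᴴ * η * A)) *ᵥ (fun p => if p.1 = p.2 then 1 else 0) := by
    simp only [dotProduct, Matrix.mulVec, matExt, Matrix.of_apply,
      Fintype.sum_prod_type, Pi.star_apply, apply_ite (star : ℂ → ℂ), star_one, star_zero,
      ite_mul, mul_ite, one_mul, mul_one, zero_mul, mul_zero,
      Finset.sum_ite_irrel, Finset.sum_const_zero,
      Finset.sum_ite_eq, Finset.sum_ite_eq', Finset.mem_univ, if_true]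
    simp only [this1, starRingEnd_apply, Finset.mul_sum]
    refine Finset.sum_congr rfl fun i _ => ?_
    rw [Finset.sum_comm]
    refine Finset.sum_congr rfl fun j _ => Finset.sum_congr rfl fun s _ =>
      Finset.sum_congr rfl fun t _ => ?_
    ring
  rw [key]
  exact hP.dotProduct_mulVec_nonneg _
end

section
/- If E[ρ] = Σ_i ρ'_i tr(D_i† ρ) where all ρ'_i are positive semidefinite with unit trace and all D_i are positive semidefinite, and Σ_i D_i = 1, then E is an entanglement-breaking channel: for every ancilla dimension n and every bipartite state η, the output (E ⊗ id_n)[η] is separable. -/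
open Matrix Kronecker BigOperators ComplexOrder

open scoped MatrixOrder in
theorem Matrix.posSemidef_iff_eq_transpose_mul_self {m : Type*} [Fintype m] [DecidableEq m]
    {A : Matrix m m ℂ} : A.PosSemidef ↔ ∃ B : Matrix m m ℂ, A = Bᴴ * B := by
  constructor
  · intro hA
    obtain ⟨B, hB⟩ := CStarAlgebra.nonneg_iff_eq_star_mul_self.mp hA.nonneg
    exact ⟨B, hB⟩
  · rintro ⟨B, rfl⟩
    exact Matrix.posSemidef_conjTranspose_mul_self B

lemma psd_trace_nonneg {m : Type*} [Fintype m] [DecidableEq m]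
    {M : Matrix m m ℂ} (hM : M.PosSemidef) : 0 ≤ M.trace := by
  obtain ⟨B, rfl⟩ := Matrix.posSemidef_iff_eq_transpose_mul_self.mp hM
  rw [Matrix.trace]
  refine Finset.sum_nonneg fun a _ => ?_
  rw [Matrix.diag_apply, Matrix.mul_apply]
  exact Finset.sum_nonneg fun r _ => by
    rw [Matrix.conjTranspose_apply]; exact star_mul_self_nonneg _

lemma psd_trace_zero {m : Type*} [Fintype m] [DecidableEq m]
    {M : Matrix m m ℂ} (hM : M.PosSemidef) (h : M.trace = 0) : M = 0 := by
  obtain ⟨B, rfl⟩ := Matrix.posSemidef_iff_eq_transpose_mul_self.mp hM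
  rw [Matrix.conjTranspose_mul_self_eq_zero]
  rw [Matrix.trace] at h
  have h1 : ∀ a ∈ Finset.univ, (0:ℂ) ≤ (Bᴴ * B).diag a := fun a _ => by
    rw [Matrix.diag_apply, Matrix.mul_apply]
    exact Finset.sum_nonneg fun r _ => by
      rw [Matrix.conjTranspose_apply]; exact star_mul_self_nonneg _
  have h2 := (Finset.sum_eq_zero_iff_of_nonneg h1).mp h
  ext r a
  have h3 := h2 a (Finset.mem_univ a)
  rw [Matrix.diag_apply, Matrix.mul_apply] at h3
  have h4 : ∀ r ∈ Finset.univ, (0:ℂ) ≤ Bᴴ a r * B r a := fun r _ => by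
    rw [Matrix.conjTranspose_apply]; exact star_mul_self_nonneg _
  have h5 := (Finset.sum_eq_zero_iff_of_nonneg h4).mp h3 r (Finset.mem_univ r)
  rw [Matrix.conjTranspose_apply] at h5
  simpa using (CStarRing.star_mul_self_eq_zero_iff (B r a)).mp h5

lemma psd_real_smul {m : Type*} [Fintype m] {M : Matrix m m ℂ} (hM : M.PosSemidef)
    {r : ℝ} (hr : 0 ≤ r) : ((r : ℂ) • M).PosSemidef := by
  constructor
  · rw [Matrix.IsHermitian, Matrix.conjTranspose_smul, hM.1]
    simp
  · intro x
    exact (hM.smul (Complex.zero_le_real.mpr hr)).2 x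

lemma psd_trace_real {m : Type*} [Fintype m] [DecidableEq m]
    {M : Matrix m m ℂ} (hM : M.PosSemidef) : M.trace = (M.trace.re : ℂ) := by
  have h := psd_trace_nonneg hM
  rw [Complex.nonneg_iff] at h
  exact Complex.ext rfl h.2.symm

/-- A measure-and-prepare map `E[ρ] = Σ_i ρ'_i tr(D_i† ρ)` with states `ρ'_i`, POVM
elements `D_i ≥ 0`, `Σ_i D_i = 1`, is entanglement breaking: for every ancilla
dimension `n` and bipartite state `η`, the output `(E ⊗ id_n)[η]` is separable. -/
theorem stmt16 {d : ℕ} {ι : Type*} [Fintype ι]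
    (ρ' D : ι → Matrix (Fin d) (Fin d) ℂ)
    (hρ'pos : ∀ i, (ρ' i).PosSemidef) (hρ'tr : ∀ i, (ρ' i).trace = 1)
    (hDpos : ∀ i, (D i).PosSemidef) (hDsum : ∑ i, D i = 1)
    (n : ℕ) (η : Matrix (Fin d × Fin n) (Fin d × Fin n) ℂ)
    (hη : η.PosSemidef) (hηtr : η.trace = 1) :
    ∃ (N : ℕ) (c : Fin N → ℝ) (σ : Fin N → Matrix (Fin d) (Fin d) ℂ)
      (τ : Fin N → Matrix (Fin n) (Fin n) ℂ),
      (∀ k, 0 ≤ c k ∧ (σ k).PosSemidef ∧ (σ k).trace = 1 ∧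
        (τ k).PosSemidef ∧ (τ k).trace = 1) ∧
      matExt (fun X => ∑ i, ((D i)ᴴ * X).trace • ρ' i) η
        = ∑ k, (c k : ℂ) • (σ k ⊗ₖ τ k) := by
  classical
  have hn : 0 < n := by
    rcases Nat.eq_zero_or_pos n with h | h
    · exfalso; subst h
      rw [Matrix.trace_eq_zero_of_isEmpty] at hηtr
      exact one_ne_zero hηtr.symm
    · exact h
  obtain ⟨G, hG⟩ := Matrix.posSemidef_iff_eq_transpose_mul_self.mp hη
  choose B hB using fun i => Matrix.posSemidef_iff_eq_transpose_mul_self.mp (hDpos i)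
  set C : ι → Matrix (Fin d × (Fin d × Fin n)) (Fin n) ℂ :=
    fun i => Matrix.of fun r a => ∑ j, star (B i r.1 j) * G r.2 (j, a) with hC
  set T : ι → Matrix (Fin n) (Fin n) ℂ := fun i => (C i)ᴴ * C i with hT
  have hTpsd : ∀ i, (T i).PosSemidef := fun i =>
    Matrix.posSemidef_conjTranspose_mul_self (C i)
  -- key scalar identity
  have hkey : ∀ (i : ι) (a b : Fin n),
      ((D i)ᴴ * (Matrix.of fun k j => η (k, a) (j, b))).trace = T i a b := by
    intro i a b
    show _ = ((C i)ᴴ * C i) a b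
    have e0 : ((D i)ᴴ * (Matrix.of fun k j => η (k, a) (j, b))).trace
        = ∑ j, ∑ k, star (D i k j) * η (k, a) (j, b) := by
      simp [Matrix.trace, Matrix.mul_apply, Matrix.conjTranspose_apply]
    have e1 : ∀ j k : Fin d, star (D i k j) * η (k, a) (j, b)
        = ∑ m, ∑ p, (B i m k * star (B i m j)) * (star (G p (k, a)) * G p (j, b)) := by
      intro j k
      rw [hB i, hG]
      simp only [Matrix.mul_apply, Matrix.conjTranspose_apply, star_sum, StarMul.star_mul,
        star_star]
      rw [Finset.sum_mul_sum]
      refine Finset.sum_congr rfl fun m _ => Finset.sum_congr rfl fun p _ => by ring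
    have e2 : ((C i)ᴴ * C i) a b
        = ∑ m, ∑ p, ∑ k, ∑ j, (B i m k * star (B i m j)) * (star (G p (k, a)) * G p (j, b)) := by
      simp only [Matrix.mul_apply, Matrix.conjTranspose_apply, hC, Matrix.of_apply,
        star_sum, StarMul.star_mul, star_star]
      rw [Fintype.sum_prod_type (f := fun x : Fin d × (Fin d × Fin n) =>
        (∑ k, star (G x.2 (k, a)) * B i x.1 k) * ∑ j, star (B i x.1 j) * G x.2 (j, b))]
      refine Finset.sum_congr rfl fun r _ => Finset.sum_congr rfl fun p _ => ?_
      rw [Finset.sum_mul_sum]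
      refine Finset.sum_congr rfl fun k _ => Finset.sum_congr rfl fun j _ => by ring
    rw [e0, e2]
    simp only [e1]
    calc ∑ j, ∑ k, ∑ m, ∑ p : Fin d × Fin n,
          (B i m k * star (B i m j)) * (star (G p (k, a)) * G p (j, b))
        = ∑ j, ∑ m, ∑ k, ∑ p : Fin d × Fin n,
          (B i m k * star (B i m j)) * (star (G p (k, a)) * G p (j, b)) :=
          Finset.sum_congr rfl fun j _ => Finset.sum_comm
      _ = ∑ m, ∑ j, ∑ k, ∑ p : Fin d × Fin n,
          (B i m k * star (B i m j)) * (star (G p (k, a)) * G p (j, b)) :=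
          Finset.sum_comm
      _ = ∑ m, ∑ j, ∑ p : Fin d × Fin n, ∑ k,
          (B i m k * star (B i m j)) * (star (G p (k, a)) * G p (j, b)) :=
          Finset.sum_congr rfl fun m _ => Finset.sum_congr rfl fun j _ => Finset.sum_comm
      _ = ∑ m, ∑ p : Fin d × Fin n, ∑ j, ∑ k,
          (B i m k * star (B i m j)) * (star (G p (k, a)) * G p (j, b)) :=
          Finset.sum_congr rfl fun m _ => Finset.sum_comm
      _ = ∑ m, ∑ p : Fin d × Fin n, ∑ k, ∑ j,
          (B i m k * star (B i m j)) * (star (G p (k, a)) * G p (j, b)) :=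
          Finset.sum_congr rfl fun m _ => Finset.sum_congr rfl fun p _ => Finset.sum_comm
  -- block identity
  have key : matExt (fun X => ∑ i, ((D i)ᴴ * X).trace • ρ' i) η
      = ∑ i, ρ' i ⊗ₖ T i := by
    ext p q
    simp only [matExt, Matrix.of_apply, Matrix.sum_apply, Matrix.smul_apply, smul_eq_mul,
      Matrix.kroneckerMap_apply]
    exact Finset.sum_congr rfl fun i _ => by rw [hkey i p.2 q.2, mul_comm]
  set e : Fin (Fintype.card ι) ≃ ι := (Fintype.equivFin ι).symm with he
  refine ⟨Fintype.card ι, fun k => ((T (e k)).trace).re, fun k => ρ' (e k),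
    fun k => if (T (e k)).trace = 0 then
        Matrix.diagonal (Pi.single (⟨0, hn⟩ : Fin n) (1 : ℂ))
      else ((T (e k)).trace)⁻¹ • T (e k), fun k => ?_, ?_⟩
  · refine ⟨(Complex.nonneg_iff.mp (psd_trace_nonneg (hTpsd (e k)))).1,
      hρ'pos (e k), hρ'tr (e k), ?_, ?_⟩
    · beta_reduce
      by_cases h : (T (e k)).trace = 0
      · rw [if_pos h]
        refine Matrix.posSemidef_diagonal_iff.mpr fun j => ?_
        rw [Pi.single_apply]
        split <;> simp
      · rw [if_neg h]
        have h1 : ((T (e k)).trace)⁻¹ • T (e k)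
            = ((((T (e k)).trace.re⁻¹ : ℝ)) : ℂ) • T (e k) := by
          rw [Complex.ofReal_inv, ← psd_trace_real (hTpsd (e k))]
        rw [h1]
        exact psd_real_smul (hTpsd (e k))
          (inv_nonneg.mpr (Complex.nonneg_iff.mp (psd_trace_nonneg (hTpsd (e k)))).1)
    · beta_reduce
      by_cases h : (T (e k)).trace = 0
      · rw [if_pos h, Matrix.trace_diagonal]
        simp
      · rw [if_neg h, Matrix.trace_smul, smul_eq_mul, inv_mul_cancel₀ h]
  · rw [key, ← Equiv.sum_comp e (fun i => ρ' i ⊗ₖ T i)]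
    refine Finset.sum_congr rfl fun k _ => ?_
    beta_reduce
    by_cases h : (T (e k)).trace = 0
    · have hz : T (e k) = 0 := psd_trace_zero (hTpsd (e k)) h
      rw [if_pos h, h, hz, Matrix.kronecker_zero]
      simp
    · rw [if_neg h, Matrix.kronecker_smul, smul_smul, ← psd_trace_real (hTpsd (e k)),
        mul_inv_cancel₀ h, one_smul]
end

section
/- (Pechukas–Alicki theorem) Let 𝔄 : M_d(ℂ) → M_d(ℂ) ⊗ M_n(ℂ) be a linear assignment map that is consistent (tr_e 𝔄[ρ] = ρ for every density matrix ρ) and positive (𝔄[ρ] ≥ 0 for every density matrix ρ). Then there exists a fixed density matrix τ on M_n(ℂ) such that 𝔄[ρ] = ρ ⊗ τ for all density matrices ρ; i.e., the assignment produces an uncorrelated product state. -/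
open Matrix Kronecker BigOperators ComplexOrder

noncomputable section PA

variable {d n : ℕ}

def qf (M : Matrix (Fin d × Fin n) (Fin d × Fin n) ℂ)
    (w v : Fin d → ℂ) (a b : Fin n) : ℂ :=
  ∑ i, ∑ j, (starRingEnd ℂ) (w i) * M (i, a) (j, b) * v j

def tens (w : Fin d → ℂ) (a : Fin n) : Fin d × Fin n → ℂ :=
  fun p => if p.2 = a then w p.1 else 0

lemma mulVec_tens (M : Matrix (Fin d × Fin n) (Fin d × Fin n) ℂ)
    (v : Fin d → ℂ) (b : Fin n) (p : Fin d × Fin n) :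
    (M *ᵥ tens v b) p = ∑ j, M p (j, b) * v j := by
  rw [mulVec, dotProduct, Fintype.sum_prod_type]
  refine Finset.sum_congr rfl fun j _ => ?_
  simp [tens]

lemma qf_eq_dot (M : Matrix (Fin d × Fin n) (Fin d × Fin n) ℂ)
    (w v : Fin d → ℂ) (a b : Fin n) :
    qf M w v a b = star (tens w a) ⬝ᵥ M *ᵥ (tens v b) := by
  rw [dotProduct, Fintype.sum_prod_type]
  refine Finset.sum_congr rfl fun i _ => ?_
  have : ∀ c, star (tens w a) (i, c) * (M *ᵥ tens v b) (i, c)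
      = if c = a then (starRingEnd ℂ) (w i) * ∑ j, M (i, c) (j, b) * v j else 0 := by
    intro c
    rw [mulVec_tens]
    simp only [tens, Pi.star_apply]
    split
    · rfl
    · simp
  simp only [this, Finset.sum_ite_eq' Finset.univ a, Finset.mem_univ, if_true]
  rw [Finset.mul_sum]
  exact Finset.sum_congr rfl fun j _ => by ring

end PA
section PA2
variable {d n : ℕ} {M : Matrix (Fin d × Fin n) (Fin d × Fin n) ℂ}

lemma qf_nonneg (hM : M.PosSemidef) (w : Fin d → ℂ) (a : Fin n) :
    0 ≤ qf M w w a a := by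
  rw [qf_eq_dot]; exact hM.dotProduct_mulVec_nonneg _

lemma qf_kernel (hM : M.PosSemidef) {w : Fin d → ℂ} {b : Fin n}
    (h : qf M w w b b = 0) (v : Fin d → ℂ) (a : Fin n) :
    qf M v w a b = 0 := by
  rw [qf_eq_dot] at h ⊢
  rw [(hM.dotProduct_mulVec_zero_iff _).mp h, dotProduct_zero]

lemma qf_conj (hM : M.IsHermitian) (w v : Fin d → ℂ) (a b : Fin n) :
    qf M w v a b = (starRingEnd ℂ) (qf M v w b a) := by
  unfold qf
  rw [map_sum]
  rw [Finset.sum_comm]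
  refine Finset.sum_congr rfl fun i _ => ?_
  rw [map_sum]
  refine Finset.sum_congr rfl fun j _ => ?_
  simp only [_root_.map_mul, RingHomCompTriple.comp_apply, RingHom.id_apply, starRingEnd_self_apply]
  have key : ∀ p q, (starRingEnd ℂ) (M p q) = M q p := by
    intro p q
    conv_rhs => rw [← hM]
    rfl
  rw [key]; ring

lemma qf_add_right (w v v' : Fin d → ℂ) (a b : Fin n) :
    qf M w (v + v') a b = qf M w v a b + qf M w v' a b := by
  unfold qf
  rw [← Finset.sum_add_distrib]
  refine Finset.sum_congr rfl fun i _ => ?_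
  rw [← Finset.sum_add_distrib]
  exact Finset.sum_congr rfl fun j _ => by simp [mul_add]

lemma qf_smul_right (w v : Fin d → ℂ) (c : ℂ) (a b : Fin n) :
    qf M w (c • v) a b = c * qf M w v a b := by
  unfold qf
  rw [Finset.mul_sum]
  refine Finset.sum_congr rfl fun i _ => ?_
  rw [Finset.mul_sum]
  exact Finset.sum_congr rfl fun j _ => by simp; ring

end PA2
section PA3
variable {d n : ℕ} {M : Matrix (Fin d × Fin n) (Fin d × Fin n) ℂ}

lemma qf_add_left (w w' v : Fin d → ℂ) (a b : Fin n) :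
    qf M (w + w') v a b = qf M w v a b + qf M w' v a b := by
  unfold qf
  rw [← Finset.sum_add_distrib]
  refine Finset.sum_congr rfl fun i _ => ?_
  rw [← Finset.sum_add_distrib]
  refine Finset.sum_congr rfl fun j _ => ?_
  simp only [Pi.add_apply, map_add]
  ring

lemma qf_smul_left (w v : Fin d → ℂ) (c : ℂ) (a b : Fin n) :
    qf M (c • w) v a b = (starRingEnd ℂ) c * qf M w v a b := by
  unfold qf
  rw [Finset.mul_sum]
  refine Finset.sum_congr rfl fun i _ => ?_
  rw [Finset.mul_sum]
  refine Finset.sum_congr rfl fun j _ => ?_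
  simp only [Pi.smul_apply, smul_eq_mul, _root_.map_mul]
  ring

lemma qf_single (i j : Fin d) (a b : Fin n) :
    qf M (Pi.single i 1) (Pi.single j 1) a b = M (i, a) (j, b) := by
  unfold qf
  have h1 : ∀ i' j', (starRingEnd ℂ) ((Pi.single i 1 : Fin d → ℂ) i') * M (i', a) (j', b) * (Pi.single j 1 : Fin d → ℂ) j'
      = if i' = i then (if j' = j then M (i', a) (j', b) else 0) else 0 := by
    intro i' j'
    rcases eq_or_ne i' i with h | h <;> rcases eq_or_ne j' j with h' | h' <;>
      simp [h, h', Pi.single_apply]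
  rw [Finset.sum_congr rfl fun x _ => Finset.sum_congr rfl fun y _ => h1 x y]
  have h2 : ∀ x : Fin d, (∑ y : Fin d, if x = i then if y = j then M (x, a) (y, b) else 0 else 0)
      = if x = i then M (x, a) (j, b) else 0 := by
    intro x
    split
    · rw [Finset.sum_ite_eq' Finset.univ j (fun y => M (x, a) (y, b))]
      simp
    · simp
  rw [Finset.sum_congr rfl fun x _ => h2 x,
    Finset.sum_ite_eq' Finset.univ i (fun x => M (x, a) (j, b))]
  simp

theorem pure_struct (hM : M.PosSemidef) {ψ : Fin d → ℂ}
    (hψ : ∑ i, (starRingEnd ℂ) (ψ i) * ψ i = 1)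
    (htr : ∀ i j, (∑ a, M (i, a) (j, a)) = ψ i * (starRingEnd ℂ) (ψ j))
    (i j : Fin d) (a b : Fin n) :
    M (i, a) (j, b) = ψ i * (starRingEnd ℂ) (ψ j) * qf M ψ ψ a b := by
  set w : Fin d → Fin d → ℂ := fun k => Pi.single k 1 - (starRingEnd ℂ) (ψ k) • ψ with hw
  have hfac : ∀ k, (∑ x, (starRingEnd ℂ) (w k x) * ψ x) = 0 := by
    intro k
    have : ∀ x, (starRingEnd ℂ) (w k x) * ψ x
        = (starRingEnd ℂ) ((Pi.single k 1 : Fin d → ℂ) x) * ψ x - ψ k * ((starRingEnd ℂ) (ψ x) * ψ x) := by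
      intro x
      simp only [hw, Pi.sub_apply, Pi.smul_apply, smul_eq_mul, map_sub, _root_.map_mul,
        RingHomCompTriple.comp_apply, RingHom.id_apply, starRingEnd_self_apply]
      ring
    rw [Finset.sum_congr rfl fun x _ => this x, Finset.sum_sub_distrib, ← Finset.mul_sum, hψ,
      mul_one]
    have : ∀ x, (starRingEnd ℂ) ((Pi.single k 1 : Fin d → ℂ) x) * ψ x = if x = k then ψ x else 0 := by
      intro x
      rcases eq_or_ne x k with h | h <;> simp [h, Pi.single_apply]
    rw [Finset.sum_congr rfl fun x _ => this x, Finset.sum_ite_eq' Finset.univ, if_pos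
      (Finset.mem_univ k)]
    simp
  have hsum0 : ∀ k, (∑ b, qf M (w k) (w k) b b) = 0 := by
    intro k
    have : ∀ b, qf M (w k) (w k) b b
        = ∑ x, ∑ y, (starRingEnd ℂ) (w k x) * M (x, b) (y, b) * w k y := fun b => rfl
    calc (∑ b, qf M (w k) (w k) b b)
        = ∑ x, ∑ y, (starRingEnd ℂ) (w k x) * (∑ b, M (x, b) (y, b)) * w k y := by
          rw [Finset.sum_congr rfl fun b _ => this b, Finset.sum_comm]
          refine Finset.sum_congr rfl fun x _ => ?_
          rw [Finset.sum_comm]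
          refine Finset.sum_congr rfl fun y _ => ?_
          rw [Finset.mul_sum, Finset.sum_mul]
      _ = (∑ x, (starRingEnd ℂ) (w k x) * ψ x) *
            (∑ y, (starRingEnd ℂ) (ψ y) * w k y) := by
          rw [Finset.sum_mul]
          refine Finset.sum_congr rfl fun x _ => ?_
          rw [Finset.mul_sum]
          refine Finset.sum_congr rfl fun y _ => ?_
          rw [htr]
          ring
      _ = 0 := by rw [hfac, zero_mul]
  have hker : ∀ k b, qf M (w k) (w k) b b = 0 := by
    intro k b
    have := (Finset.sum_eq_zero_iff_of_nonneg
      (fun b _ => qf_nonneg hM (w k) b)).mp (hsum0 k)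
    exact this b (Finset.mem_univ b)
  have hR : ∀ (v : Fin d → ℂ) k a b, qf M v (w k) a b = 0 :=
    fun v k a b => qf_kernel hM (hker k b) v a
  have hL : ∀ k (v : Fin d → ℂ) a b, qf M (w k) v a b = 0 := by
    intro k v a b
    rw [qf_conj hM.1, hR, map_zero]
  have hsingle : ∀ k, Pi.single k (1:ℂ) = (starRingEnd ℂ) (ψ k) • ψ + w k := by
    intro k
    simp [hw]
  rw [← qf_single (M := M) i j a b, hsingle i, qf_add_left, qf_smul_left, hL, add_zero,
    hsingle j, qf_add_right, qf_smul_right, hR, add_zero]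
  simp only [RingHomCompTriple.comp_apply, RingHom.id_apply, starRingEnd_self_apply]
  ring

end PA3
section PA4
variable {d n : ℕ}

lemma ip_conj (u v : Fin d → ℂ) :
    (∑ i, (starRingEnd ℂ) (u i) * v i) = (starRingEnd ℂ) (∑ i, (starRingEnd ℂ) (v i) * u i) := by
  rw [map_sum]
  refine Finset.sum_congr rfl fun i _ => ?_
  simp only [_root_.map_mul, RingHomCompTriple.comp_apply, RingHom.id_apply,
    starRingEnd_self_apply]
  ring

lemma proj_posSemidef (ψ : Fin d → ℂ) :
    (Matrix.of fun i j => ψ i * (starRingEnd ℂ) (ψ j)).PosSemidef := by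
  refine PosSemidef.of_dotProduct_mulVec_nonneg ?_ ?_
  · ext i j
    show star (ψ j * (starRingEnd ℂ) (ψ i)) = ψ i * (starRingEnd ℂ) (ψ j)
    rw [star_mul', starRingEnd_apply, star_star, starRingEnd_apply]
    ring
  · intro x
    have hz : star x ⬝ᵥ (Matrix.of fun i j => ψ i * (starRingEnd ℂ) (ψ j)) *ᵥ x
        = star (∑ j, (starRingEnd ℂ) (ψ j) * x j) * (∑ j, (starRingEnd ℂ) (ψ j) * x j) := by
      rw [dotProduct]
      have : ∀ i, star x i * ((Matrix.of fun i j => ψ i * (starRingEnd ℂ) (ψ j)) *ᵥ x) i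
          = ((starRingEnd ℂ) (x i) * ψ i) * (∑ j, (starRingEnd ℂ) (ψ j) * x j) := by
        intro i
        rw [mulVec, dotProduct, Finset.mul_sum, Finset.mul_sum]
        refine Finset.sum_congr rfl fun j _ => ?_
        simp only [Matrix.of_apply, Pi.star_apply, starRingEnd_apply]
        ring
      rw [Finset.sum_congr rfl fun i _ => this i, ← Finset.sum_mul]
      congr 1
      rw [ip_conj x ψ]
      rfl
    rw [hz]
    exact star_mul_self_nonneg _
lemma proj_trace {ψ : Fin d → ℂ}
    (hψ : ∑ i, (starRingEnd ℂ) (ψ i) * ψ i = 1) :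
    (Matrix.of fun i j => ψ i * (starRingEnd ℂ) (ψ j)).trace = 1 := by
  rw [Matrix.trace, ← hψ]
  refine Finset.sum_congr rfl fun i _ => ?_
  simp [Matrix.diag, mul_comm]

end PA4
section PA5
variable {d n : ℕ}

/-- inner product -/
noncomputable def ipd (u v : Fin d → ℂ) : ℂ := ∑ i, (starRingEnd ℂ) (u i) * v i

lemma ipd_conj (u v : Fin d → ℂ) : ipd u v = (starRingEnd ℂ) (ipd v u) := ip_conj u v

lemma ipd_add_right (u v w : Fin d → ℂ) : ipd u (v + w) = ipd u v + ipd u w := by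
  unfold ipd; rw [← Finset.sum_add_distrib]
  exact Finset.sum_congr rfl fun i _ => by simp [mul_add]

lemma ipd_sub_right (u v w : Fin d → ℂ) : ipd u (v - w) = ipd u v - ipd u w := by
  unfold ipd; rw [← Finset.sum_sub_distrib]
  exact Finset.sum_congr rfl fun i _ => by simp [mul_sub]

lemma ipd_smul_right (u v : Fin d → ℂ) (c : ℂ) : ipd u (c • v) = c * ipd u v := by
  unfold ipd; rw [Finset.mul_sum]
  exact Finset.sum_congr rfl fun i _ => by simp; ring

lemma ipd_add_left (u v w : Fin d → ℂ) : ipd (u + v) w = ipd u w + ipd v w := by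
  unfold ipd; rw [← Finset.sum_add_distrib]
  exact Finset.sum_congr rfl fun i _ => by simp [add_mul]

lemma ipd_sub_left (u v w : Fin d → ℂ) : ipd (u - v) w = ipd u w - ipd v w := by
  unfold ipd; rw [← Finset.sum_sub_distrib]
  exact Finset.sum_congr rfl fun i _ => by simp [sub_mul]

lemma ipd_smul_left (u v : Fin d → ℂ) (c : ℂ) :
    ipd (c • u) v = (starRingEnd ℂ) c * ipd u v := by
  unfold ipd; rw [Finset.mul_sum]
  exact Finset.sum_congr rfl fun i _ => by simp; ring

lemma qf_matrix_add (M M' : Matrix (Fin d × Fin n) (Fin d × Fin n) ℂ)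
    (w v : Fin d → ℂ) (a b : Fin n) :
    qf (M + M') w v a b = qf M w v a b + qf M' w v a b := by
  unfold qf; rw [← Finset.sum_add_distrib]
  refine Finset.sum_congr rfl fun i _ => ?_
  rw [← Finset.sum_add_distrib]
  exact Finset.sum_congr rfl fun j _ => by simp [Matrix.add_apply]; ring

lemma sum_factor (ψ v : Fin d → ℂ) (T : ℂ) :
    (∑ i, ∑ j, (starRingEnd ℂ) (v i) * (ψ i * (starRingEnd ℂ) (ψ j) * T) * v j)
      = ipd v ψ * ipd ψ v * T := by
  unfold ipd
  calc (∑ i, ∑ j, (starRingEnd ℂ) (v i) * (ψ i * (starRingEnd ℂ) (ψ j) * T) * v j)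
      = ∑ i, (((starRingEnd ℂ) (v i) * ψ i) * ((∑ j, (starRingEnd ℂ) (ψ j) * v j) * T)) := by
        refine Finset.sum_congr rfl fun i _ => ?_
        rw [Finset.sum_mul, Finset.mul_sum]
        exact Finset.sum_congr rfl fun j _ => by ring
    _ = _ := by rw [← Finset.sum_mul]; ring

end PA5
section PA6
variable {d n : ℕ}
variable (A : Matrix (Fin d) (Fin d) ℂ →ₗ[ℝ] Matrix (Fin d × Fin n) (Fin d × Fin n) ℂ)

/-- pure-state projector -/
def projM (ψ : Fin d → ℂ) : Matrix (Fin d) (Fin d) ℂ :=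
  Matrix.of fun i j => ψ i * (starRingEnd ℂ) (ψ j)

/-- assigned environment state for a pure system state -/
noncomputable def TauF (ψ : Fin d → ℂ) (a b : Fin n) : ℂ := qf (A (projM ψ)) ψ ψ a b

variable (hcons : ∀ ρ : Matrix (Fin d) (Fin d) ℂ, ρ.PosSemidef → ρ.trace = 1 →
      (Matrix.of fun i j => ∑ a, A ρ (i, a) (j, a)) = ρ)
variable (hpos : ∀ ρ : Matrix (Fin d) (Fin d) ℂ, ρ.PosSemidef → ρ.trace = 1 →
      (A ρ).PosSemidef)

include hcons hpos in
lemma structA {ψ : Fin d → ℂ} (hψ : ipd ψ ψ = 1) (i j : Fin d) (a b : Fin n) :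
    A (projM ψ) (i, a) (j, b) = ψ i * (starRingEnd ℂ) (ψ j) * TauF A ψ a b := by
  have hP : (projM ψ).PosSemidef := proj_posSemidef ψ
  have hT : (projM ψ).trace = 1 := proj_trace hψ
  have htr : ∀ i j, (∑ a, A (projM ψ) (i, a) (j, a)) = ψ i * (starRingEnd ℂ) (ψ j) := by
    intro i j
    have h := hcons (projM ψ) hP hT
    have := congrFun (congrFun h i) j
    simpa [projM] using this
  exact pure_struct (hpos _ hP hT) hψ htr i j a b

include hcons hpos in
lemma mixA {ψ φ χ χ' : Fin d → ℂ} (hψ : ipd ψ ψ = 1) (hφ : ipd φ φ = 1)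
    (hχ : ipd χ χ = 1) (hχ' : ipd χ' χ' = 1)
    (hdec : projM ψ + projM φ = projM χ + projM χ')
    (v : Fin d → ℂ) (a b : Fin n) :
    ipd v ψ * ipd ψ v * TauF A ψ a b + ipd v φ * ipd φ v * TauF A φ a b
      = ipd v χ * ipd χ v * TauF A χ a b + ipd v χ' * ipd χ' v * TauF A χ' a b := by
  have hAA : A (projM ψ) + A (projM φ) = A (projM χ) + A (projM χ') := by
    rw [← map_add, ← map_add, hdec]
  have key : ∀ u : Fin d → ℂ, ipd u u = 1 →
      qf (A (projM u)) v v a b = ipd v u * ipd u v * TauF A u a b := by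
    intro u hu
    have : ∀ i j, A (projM u) (i, a) (j, b)
        = u i * (starRingEnd ℂ) (u j) * TauF A u a b :=
      fun i j => structA A hcons hpos hu i j a b
    unfold qf
    rw [Finset.sum_congr rfl fun i _ => Finset.sum_congr rfl fun j _ => by rw [this i j]]
    exact sum_factor u v (TauF A u a b)
  rw [← key ψ hψ, ← key φ hφ, ← key χ hχ, ← key χ' hχ',
    ← qf_matrix_add, ← qf_matrix_add, hAA]

end PA6
section PA7
variable {d n : ℕ}
variable (A : Matrix (Fin d) (Fin d) ℂ →ₗ[ℝ] Matrix (Fin d × Fin n) (Fin d × Fin n) ℂ)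
variable (hcons : ∀ ρ : Matrix (Fin d) (Fin d) ℂ, ρ.PosSemidef → ρ.trace = 1 →
      (Matrix.of fun i j => ∑ a, A ρ (i, a) (j, a)) = ρ)
variable (hpos : ∀ ρ : Matrix (Fin d) (Fin d) ℂ, ρ.PosSemidef → ρ.trace = 1 →
      (A ρ).PosSemidef)

include hcons hpos in
lemma tau_orth {ψ φ : Fin d → ℂ} (hψ : ipd ψ ψ = 1) (hφ : ipd φ φ = 1)
    (ho : ipd ψ φ = 0) (a b : Fin n) : TauF A ψ a b = TauF A φ a b := by
  have ho' : ipd φ ψ = 0 := by rw [ipd_conj, ho, map_zero]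
  set r : ℂ := (((Real.sqrt 2)⁻¹ : ℝ) : ℂ) with hrdef
  have hrc : (starRingEnd ℂ) r = r := Complex.conj_ofReal _
  have hrr : r * r = 1 / 2 := by
    rw [hrdef, ← Complex.ofReal_mul, ← Real.sqrt_inv, Real.mul_self_sqrt (by norm_num)]
    norm_num
  set χ : Fin d → ℂ := r • (ψ + φ) with hχdef
  set χ' : Fin d → ℂ := r • (ψ - φ) with hχ'def
  have hχu : ipd χ χ = 1 := by
    rw [hχdef, ipd_smul_left, ipd_smul_right, hrc, ipd_add_left, ipd_add_right, ipd_add_right,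
      hψ, hφ, ho, ho']
    linear_combination 2 * hrr
  have hχ'u : ipd χ' χ' = 1 := by
    rw [hχ'def, ipd_smul_left, ipd_smul_right, hrc, ipd_sub_left, ipd_sub_right, ipd_sub_right,
      hψ, hφ, ho, ho']
    linear_combination 2 * hrr
  have hdec : projM ψ + projM φ = projM χ + projM χ' := by
    ext i j
    simp only [projM, Matrix.add_apply, Matrix.of_apply, hχdef, hχ'def, Pi.smul_apply,
      Pi.add_apply, Pi.sub_apply, smul_eq_mul, _root_.map_mul, map_add, map_sub, hrc]
    linear_combination (-2 * ψ i * (starRingEnd ℂ) (ψ j) - 2 * φ i * (starRingEnd ℂ) (φ j)) * hrr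
  have e1 := mixA A hcons hpos hψ hφ hχu hχ'u hdec ψ a b
  have e2 := mixA A hcons hpos hψ hφ hχu hχ'u hdec φ a b
  have hψχ : ipd ψ χ = r := by
    rw [hχdef, ipd_smul_right, ipd_add_right, hψ, ho]; ring
  have hχψ : ipd χ ψ = r := by
    rw [hχdef, ipd_smul_left, hrc, ipd_add_left, hψ, ho']; ring
  have hψχ' : ipd ψ χ' = r := by
    rw [hχ'def, ipd_smul_right, ipd_sub_right, hψ, ho]; ring
  have hχ'ψ : ipd χ' ψ = r := by
    rw [hχ'def, ipd_smul_left, hrc, ipd_sub_left, hψ, ho']; ring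
  have hφχ : ipd φ χ = r := by
    rw [hχdef, ipd_smul_right, ipd_add_right, hφ, ho']; ring
  have hχφ : ipd χ φ = r := by
    rw [hχdef, ipd_smul_left, hrc, ipd_add_left, hφ, ho]; ring
  have hφχ' : ipd φ χ' = -r := by
    rw [hχ'def, ipd_smul_right, ipd_sub_right, hφ, ho']; ring
  have hχ'φ : ipd χ' φ = -r := by
    rw [hχ'def, ipd_smul_left, hrc, ipd_sub_left, hφ, ho]; ring
  rw [hψ, hψχ, hχψ, hψχ', hχ'ψ, ipd_conj ψ φ, ho', map_zero] at e1
  rw [hφ, hφχ, hχφ, hφχ', hχ'φ, ipd_conj φ ψ, ho, map_zero] at e2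
  linear_combination e1 - e2

include hcons hpos in
lemma tau_const (i0 : Fin d) {ψ : Fin d → ℂ} (hψ : ipd ψ ψ = 1) (a b : Fin n) :
    TauF A ψ a b = TauF A (Pi.single i0 1) a b := by
  classical
  set e0 : Fin d → ℂ := Pi.single i0 1 with he0def
  have hie : ∀ v : Fin d → ℂ, ipd e0 v = v i0 := by
    intro v
    unfold ipd
    have h1 : ∀ x, (starRingEnd ℂ) (e0 x) * v x = if x = i0 then v x else 0 := by
      intro x; rcases eq_or_ne x i0 with h | h <;> simp [he0def, h, Pi.single_apply]
    rw [Finset.sum_congr rfl fun x _ => h1 x, Finset.sum_ite_eq' Finset.univ,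
      if_pos (Finset.mem_univ _)]
  have he00 : e0 i0 = 1 := by simp [he0def]
  have he0 : ipd e0 e0 = 1 := by rw [hie, he00]
  set c : ℂ := ψ i0 with hcdef
  set w : Fin d → ℂ := ψ - c • e0 with hwdef
  have hew : ipd e0 w = 0 := by
    rw [hwdef, ipd_sub_right, ipd_smul_right, hie ψ, hie e0, he00, ← hcdef, mul_one, sub_self]
  have hwe : ipd w e0 = 0 := by rw [ipd_conj, hew, map_zero]
  have hψe0 : ipd ψ e0 = (starRingEnd ℂ) c := by rw [ipd_conj, hie]
  set s : ℝ := ∑ i, Complex.normSq (w i) with hsdef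
  have hs : (s : ℂ) = ipd w w := by
    rw [hsdef]
    push_cast
    unfold ipd
    exact Finset.sum_congr rfl fun i _ => Complex.normSq_eq_conj_mul_self
  have hsnn : 0 ≤ s := Finset.sum_nonneg fun i _ => Complex.normSq_nonneg _
  by_cases hs0 : s = 0
  · -- ψ is proportional to e0
    have hw0 : w = 0 := by
      funext x
      have := (Finset.sum_eq_zero_iff_of_nonneg
        (fun i _ => Complex.normSq_nonneg (w i))).mp (by rw [← hsdef, hs0]) x (Finset.mem_univ x)
      simpa [Complex.normSq_eq_zero] using this
    have hψe : ψ = c • e0 := by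
      have := hwdef.symm.trans hw0
      funext x
      have hx := congrFun this x
      simp only [Pi.sub_apply, Pi.zero_apply, sub_eq_zero] at hx
      exact hx
    have hcc : (starRingEnd ℂ) c * c = 1 := by
      have h := hψ
      rw [hψe, ipd_smul_left, ipd_smul_right, he0] at h
      linear_combination h
    have hproj : projM (c • e0) = projM e0 := by
      ext i j
      simp only [projM, Matrix.of_apply, Pi.smul_apply, smul_eq_mul, _root_.map_mul]
      linear_combination (e0 i * (starRingEnd ℂ) (e0 j)) * hcc
    unfold TauF
    rw [hψe, hproj, qf_smul_left, qf_smul_right]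
    linear_combination (qf (A (projM e0)) e0 e0 a b) * hcc
  · have hspos : 0 < s := lt_of_le_of_ne hsnn (Ne.symm hs0)
    set t : ℝ := Real.sqrt s with htdef
    have ht2 : (t : ℂ) * (t : ℂ) = (s : ℂ) := by
      rw [htdef, ← Complex.ofReal_mul, Real.mul_self_sqrt hsnn]
    have htne : (t : ℂ) ≠ 0 := by
      simp only [ne_eq, Complex.ofReal_eq_zero, htdef]
      exact ne_of_gt (Real.sqrt_pos.mpr hspos)
    have htc : (starRingEnd ℂ) ((t : ℝ) : ℂ) = (t : ℂ) := Complex.conj_ofReal _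
    set φ : Fin d → ℂ := ((t : ℂ)⁻¹) • w with hφdef
    have htinvc : (starRingEnd ℂ) ((t : ℂ)⁻¹) = (t : ℂ)⁻¹ := by
      rw [map_inv₀, htc]
    have hφu : ipd φ φ = 1 := by
      rw [hφdef, ipd_smul_left, ipd_smul_right, htinvc, ← hs, ← ht2]
      field_simp
    have heφ : ipd e0 φ = 0 := by rw [hφdef, ipd_smul_right, hew, mul_zero]
    have hφe : ipd φ e0 = 0 := by rw [ipd_conj, heφ, map_zero]
    have horth : TauF A e0 a b = TauF A φ a b := tau_orth A hcons hpos he0 hφu heφ a b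
    have hψdec : ψ = c • e0 + (t : ℂ) • φ := by
      rw [hφdef, smul_smul, mul_inv_cancel₀ htne, one_smul, hwdef]
      funext x
      simp only [Pi.add_apply, Pi.sub_apply, Pi.smul_apply]
      ring
    have hφψ : ipd φ ψ = (t : ℂ) := by
      rw [hψdec, ipd_add_right, ipd_smul_right, ipd_smul_right, hφe, hφu, mul_zero, mul_one,
        zero_add]
    have hψφ : ipd ψ φ = (t : ℂ) := by rw [ipd_conj, hφψ, htc]
    have he0ψ : ipd e0 ψ = c := hie ψ
    have hcc : (starRingEnd ℂ) c * c + (t : ℂ) * (t : ℂ) = 1 := by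
      have h := hψ
      rw [hψdec, ipd_add_left, ipd_smul_left, ipd_smul_left, htc] at h
      rw [show ipd e0 (c • e0 + (t:ℂ) • φ) = c by
        rw [ipd_add_right, ipd_smul_right, ipd_smul_right, he0, heφ]; ring] at h
      rw [show ipd φ (c • e0 + (t:ℂ) • φ) = (t:ℂ) by
        rw [ipd_add_right, ipd_smul_right, ipd_smul_right, hφe, hφu]; ring] at h
      linear_combination h
    set ψ' : Fin d → ℂ := (-(t : ℂ)) • e0 + (starRingEnd ℂ) c • φ with hψ'def
    have he0ψ' : ipd e0 ψ' = -(t : ℂ) := by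
      rw [hψ'def, ipd_add_right, ipd_smul_right, ipd_smul_right, he0, heφ]; ring
    have hφψ' : ipd φ ψ' = (starRingEnd ℂ) c := by
      rw [hψ'def, ipd_add_right, ipd_smul_right, ipd_smul_right, hφe, hφu]; ring
    have hψ'u : ipd ψ' ψ' = 1 := by
      rw [hψ'def, ipd_add_left, ipd_smul_left, ipd_smul_left]
      rw [show ipd e0 ((-(t:ℂ)) • e0 + (starRingEnd ℂ) c • φ) = -(t:ℂ) from he0ψ']
      rw [show ipd φ ((-(t:ℂ)) • e0 + (starRingEnd ℂ) c • φ) = (starRingEnd ℂ) c from hφψ']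
      simp only [map_neg, htc, RingHomCompTriple.comp_apply, RingHom.id_apply,
        starRingEnd_self_apply]
      linear_combination hcc
    have hψψ' : ipd ψ ψ' = 0 := by
      rw [hψdec, ipd_add_left, ipd_smul_left, ipd_smul_left, he0ψ', hφψ', htc]
      ring
    have hψ'ψ : ipd ψ' ψ = 0 := by rw [ipd_conj, hψψ', map_zero]
    have hdec : projM e0 + projM φ = projM ψ + projM ψ' := by
      ext i j
      have hψi := congrFun hψdec i
      have hψj := congrFun hψdec j
      simp only [Pi.add_apply, Pi.smul_apply, smul_eq_mul] at hψi hψj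
      simp only [projM, Matrix.add_apply, Matrix.of_apply, hψi, hψj, hψ'def, Pi.add_apply,
        Pi.smul_apply, smul_eq_mul, _root_.map_mul, map_add, map_neg, htc,
        RingHomCompTriple.comp_apply, RingHom.id_apply, starRingEnd_self_apply]
      linear_combination (-(e0 i * (starRingEnd ℂ) (e0 j)) - φ i * (starRingEnd ℂ) (φ j)) * hcc
    have mix := mixA A hcons hpos he0 hφu hψ hψ'u hdec ψ a b
    rw [hψ, hψe0, he0ψ, hψφ, hφψ, hψψ', hψ'ψ] at mix
    rw [← horth] at mix
    linear_combination -mix + (TauF A e0 a b) * hcc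

end PA7
section PA8
variable {d n : ℕ}

lemma ipd_single (i0 : Fin d) (v : Fin d → ℂ) : ipd (Pi.single i0 1) v = v i0 := by
  unfold ipd
  have h1 : ∀ x, (starRingEnd ℂ) ((Pi.single i0 1 : Fin d → ℂ) x) * v x
      = if x = i0 then v x else 0 := by
    intro x; rcases eq_or_ne x i0 with h | h <;> simp [h, Pi.single_apply]
  rw [Finset.sum_congr rfl fun x _ => h1 x, Finset.sum_ite_eq' Finset.univ,
    if_pos (Finset.mem_univ _)]

end PA8

/-- (Pechukas–Alicki) A consistent, positive, (real-)linear assignment map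
`𝔄 : M_d(ℂ) → M_d(ℂ) ⊗ M_n(ℂ)` necessarily assigns an uncorrelated product state:
there is a fixed environment density matrix `τ` with `𝔄[ρ] = ρ ⊗ τ` for all density
matrices `ρ`. -/
theorem stmt17 {d n : ℕ} (hd : 0 < d)
    (A : Matrix (Fin d) (Fin d) ℂ →ₗ[ℝ] Matrix (Fin d × Fin n) (Fin d × Fin n) ℂ)
    (hcons : ∀ ρ : Matrix (Fin d) (Fin d) ℂ, ρ.PosSemidef → ρ.trace = 1 →
      (Matrix.of fun i j => ∑ a, A ρ (i, a) (j, a)) = ρ)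
    (hpos : ∀ ρ : Matrix (Fin d) (Fin d) ℂ, ρ.PosSemidef → ρ.trace = 1 →
      (A ρ).PosSemidef) :
    ∃ τ : Matrix (Fin n) (Fin n) ℂ, τ.PosSemidef ∧ τ.trace = 1 ∧
      ∀ ρ : Matrix (Fin d) (Fin d) ℂ, ρ.PosSemidef → ρ.trace = 1 →
        A ρ = ρ ⊗ₖ τ := by
  classical
  set i0 : Fin d := ⟨0, hd⟩ with hi0
  set e0 : Fin d → ℂ := Pi.single i0 1 with he0def
  have he0u : ipd e0 e0 = 1 := by rw [he0def, ipd_single]; simp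
  have hPe : (projM e0).PosSemidef := proj_posSemidef e0
  have hTe : (projM e0).trace = 1 := proj_trace he0u
  have hM := hpos (projM e0) hPe hTe
  refine ⟨Matrix.of fun a b => TauF A e0 a b, ?_, ?_, ?_⟩
  · have hsub : (Matrix.of fun a b => TauF A e0 a b)
        = (A (projM e0)).submatrix (fun a : Fin n => (i0, a)) (fun a : Fin n => (i0, a)) := by
      ext a b
      show TauF A e0 a b = A (projM e0) (i0, a) (i0, b)
      unfold TauF
      rw [he0def]
      exact qf_single i0 i0 a b
    rw [hsub]
    exact hM.submatrix _
  · have hconsE := hcons (projM e0) hPe hTe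
    have hentry : ∀ a, TauF A e0 a a = A (projM e0) (i0, a) (i0, a) := by
      intro a
      unfold TauF
      rw [he0def]
      exact qf_single i0 i0 a a
    have h2 : (∑ a, A (projM e0) (i0, a) (i0, a)) = e0 i0 * (starRingEnd ℂ) (e0 i0) := by
      have := congrFun (congrFun hconsE i0) i0
      simpa [projM] using this
    rw [Matrix.trace]
    calc (∑ a, (Matrix.of fun a b => TauF A e0 a b).diag a)
        = ∑ a, A (projM e0) (i0, a) (i0, a) := Finset.sum_congr rfl fun a _ => hentry a
      _ = e0 i0 * (starRingEnd ℂ) (e0 i0) := h2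
      _ = 1 := by simp [he0def]
  · intro ρ hρ htρ
    have hH := hρ.1
    set U : Matrix (Fin d) (Fin d) ℂ :=
      (Matrix.IsHermitian.eigenvectorUnitary hH : Matrix (Fin d) (Fin d) ℂ) with hUdef
    set eig : Fin d → ℝ := hH.eigenvalues with heig
    set u : Fin d → Fin d → ℂ := fun k i => U i k with hudef
    have hUU : star U * U = 1 :=
      Matrix.mem_unitaryGroup_iff'.mp (Matrix.IsHermitian.eigenvectorUnitary hH).2
    have hcolu : ∀ k, ipd (u k) (u k) = 1 := by
      intro k
      have h := congrFun (congrFun hUU k) k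
      rw [Matrix.mul_apply] at h
      calc ipd (u k) (u k) = ∑ i, (star U) k i * U i k := by
            unfold ipd
            refine Finset.sum_congr rfl fun i _ => ?_
            rw [Matrix.star_apply, hudef, starRingEnd_apply]
        _ = 1 := by rw [h, Matrix.one_apply_eq]
    have hent : ∀ i j, ρ i j = ∑ k, U i k * ((eig k : ℝ) : ℂ) * (starRingEnd ℂ) (U j k) := by
      intro i j
      conv_lhs => rw [hH.spectral_theorem]
      rw [Unitary.conjStarAlgAut_apply, Matrix.mul_apply]
      refine Finset.sum_congr rfl fun k _ => ?_
      rw [Matrix.mul_diagonal, Matrix.star_apply, starRingEnd_apply]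
      rfl
    have hρdec : ρ = ∑ k, eig k • projM (u k) := by
      ext i j
      rw [Matrix.sum_apply, hent i j]
      refine Finset.sum_congr rfl fun k _ => ?_
      rw [Matrix.smul_apply]
      show U i k * ((eig k : ℝ) : ℂ) * (starRingEnd ℂ) (U j k)
          = eig k • (u k i * (starRingEnd ℂ) (u k j))
      rw [hudef, Complex.real_smul]
      ring
    have hAρ : A ρ = ∑ k, eig k • A (projM (u k)) := by
      rw [hρdec, map_sum]
      exact Finset.sum_congr rfl fun k _ => A.map_smul _ _
    ext ⟨i, a⟩ ⟨j, b⟩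
    rw [hAρ, Matrix.sum_apply]
    have hstep : ∀ k, (eig k • A (projM (u k))) (i, a) (j, b)
        = eig k • (u k i * (starRingEnd ℂ) (u k j)) * TauF A e0 a b := by
      intro k
      rw [Matrix.smul_apply, structA A hcons hpos (hcolu k) i j a b,
        tau_const A hcons hpos i0 (hcolu k) a b, ← he0def]
      rw [Complex.real_smul, Complex.real_smul]
      ring
    rw [Finset.sum_congr rfl fun k _ => hstep k, ← Finset.sum_mul]
    have : (∑ k, eig k • (u k i * (starRingEnd ℂ) (u k j))) = ρ i j := by
      rw [hρdec, Matrix.sum_apply]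
      exact Finset.sum_congr rfl fun k _ => by rw [Matrix.smul_apply]; rfl
    rw [this]
    simp [Matrix.kroneckerMap_apply]
end
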